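/- arXiv:1001.3844 — 3 statements merged into one kernel-verified Lean document; each statement's English description precedes it below -/
import Mathlib

section
/- Let $x_n$ be a sequence of functions in the Skorokhod space $D[0,1]$ converging in the Skorokhod metric to a continuous function $x$. Let $\mu_n$ be a sequence of càdlàg, non-decreasing, non-negative functions on $[0,1]$ taking values in the natural numbers, and let $f : \mathbb{N} \to \mathbb{R}$ satisfy $f(n) \to \infty$. Suppose $\mu_n / f(n)$ converges in the Skorokhod metric to a function $\mu$ with $\mu(t) > c$ for all $t \in [0,1]$, for some constant $c > 0$. Then the composed functions $t \mapsto x_{\mu_n(t)}(t)$ converge to $x$ uniformly on $[0,1]$ as $n \to \infty$. -/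
open Filter Set Topology

/-- A Skorokhod time change: a strictly increasing continuous bijection of `[0,1]`
onto itself fixing the endpoints. -/
def TimeChange (l : ℝ → ℝ) : Prop :=
  StrictMonoOn l (Icc 0 1) ∧ ContinuousOn l (Icc 0 1) ∧
    l 0 = 0 ∧ l 1 = 1 ∧ MapsTo l (Icc 0 1) (Icc 0 1) ∧ SurjOn l (Icc 0 1) (Icc 0 1)

/-- `x` and `y` are `ε`-close in the Skorokhod sense. -/
def SkorokhodClose (x y : ℝ → ℝ) (ε : ℝ) : Prop :=
  ∃ l : ℝ → ℝ, TimeChange l ∧ (∀ t ∈ Icc (0:ℝ) 1, |x t - y (l t)| ≤ ε) ∧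
    ∀ s ∈ Icc (0:ℝ) 1, ∀ t ∈ Icc (0:ℝ) 1, s ≠ t →
      |Real.log ((l t - l s) / (t - s))| ≤ ε

/-- Convergence in the Skorokhod metric on `D[0,1]`. -/
def SkorokhodTendsto (x : ℕ → ℝ → ℝ) (y : ℝ → ℝ) : Prop :=
  ∀ ε : ℝ, 0 < ε → ∃ N : ℕ, ∀ n ≥ N, SkorokhodClose (x n) y ε

/-- Càdlàg on `[0,1]`: right-continuous with finite left limits. -/
def Cadlag (x : ℝ → ℝ) : Prop :=
  (∀ t ∈ Ico (0:ℝ) 1, Tendsto x (nhdsWithin t (Ioi t)) (nhds (x t))) ∧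
    (∀ t ∈ Ioc (0:ℝ) 1, ∃ L : ℝ, Tendsto x (nhdsWithin t (Iio t)) (nhds L))

/-! Skorokhod convergence to a continuous limit is uniform convergence, since the time changes
converge uniformly to the identity. Skorokhod convergence of `μₙ / f n` to a function bounded
below by `c` keeps `μₙ / f n` above `c / 2` on all of `[0,1]`, so `μₙ(t) → ∞` uniformly in `t`
because `f n → ∞`; a uniformly divergent random index preserves uniform convergence. -/

lemma TimeChange.abs_sub_le {l : ℝ → ℝ} {ε : ℝ} (hl : TimeChange l)
    (hlog : ∀ s ∈ Icc (0:ℝ) 1, ∀ t ∈ Icc (0:ℝ) 1, s ≠ t →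
      |Real.log ((l t - l s) / (t - s))| ≤ ε)
    {t : ℝ} (ht : t ∈ Icc (0:ℝ) 1) : |l t - t| ≤ Real.exp ε - 1 := by
  obtain ⟨hmono, -, hl0, -⟩ := hl
  have h0 : (0:ℝ) ∈ Icc (0:ℝ) 1 := left_mem_Icc.mpr zero_le_one
  have hε : 0 ≤ ε :=
    (abs_nonneg _).trans (hlog 0 h0 1 (right_mem_Icc.mpr zero_le_one) zero_ne_one)
  rcases ht.1.eq_or_lt with rfl | ht0
  · simpa [hl0] using Real.one_le_exp hε
  have hratio : 0 < l t / t := div_pos (hl0 ▸ hmono h0 ht ht0) ht0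
  have hlog0 : |Real.log (l t / t)| ≤ ε := by
    simpa [hl0] using hlog 0 h0 t ht ht0.ne
  obtain ⟨hlow, hup⟩ := abs_le.mp hlog0
  have hup' : l t ≤ Real.exp ε * t := by
    rw [← div_le_iff₀ ht0, ← Real.exp_log hratio]
    exact Real.exp_le_exp.mpr hup
  have hlow' : Real.exp (-ε) * t ≤ l t := by
    rw [← le_div_iff₀ ht0, ← Real.exp_log hratio]
    exact Real.exp_le_exp.mpr (by linarith)
  -- `1 - exp (-ε) ≤ ε ≤ exp ε - 1`, and `t ≤ 1`
  have hexp_neg := Real.add_one_le_exp (-ε)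
  have hexp := Real.add_one_le_exp ε
  rw [abs_le]
  constructor <;> nlinarith [ht.2]

lemma SkorokhodClose.exists_near_id {x y : ℝ → ℝ} {ε : ℝ} (h : SkorokhodClose x y ε) :
    ∃ l : ℝ → ℝ, MapsTo l (Icc 0 1) (Icc 0 1) ∧
      ∀ t ∈ Icc (0:ℝ) 1, |l t - t| ≤ Real.exp ε - 1 ∧ |x t - y (l t)| ≤ ε := by
  obtain ⟨l, hl, hclose, hlog⟩ := h
  exact ⟨l, hl.2.2.2.2.1, fun t ht => ⟨hl.abs_sub_le hlog ht, hclose t ht⟩⟩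

theorem SkorokhodTendsto.tendstoUniformlyOn {x : ℕ → ℝ → ℝ} {y : ℝ → ℝ}
    (hx : SkorokhodTendsto x y) (hy : ContinuousOn y (Icc 0 1)) :
    TendstoUniformlyOn x y atTop (Icc 0 1) := by
  rw [Metric.tendstoUniformlyOn_iff]
  intro ε hε
  obtain ⟨δ, hδ, hyδ⟩ := Metric.uniformContinuousOn_iff.mp
    (isCompact_Icc.uniformContinuousOn_of_continuous hy) (ε / 2) (half_pos hε)
  have hexp : ∀ᶠ η in 𝓝 (0:ℝ), Real.exp η - 1 < δ ∧ η < ε / 2 := by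
    have h1 : Tendsto (fun η => Real.exp η - 1) (𝓝 0) (𝓝 0) := by
      simpa using (Real.continuous_exp.tendsto 0).sub_const 1
    exact (h1.eventually (gt_mem_nhds hδ)).and (gt_mem_nhds (half_pos hε))
  obtain ⟨η, ⟨hηδ, hηε⟩, hη⟩ :=
    ((hexp.filter_mono nhdsWithin_le_nhds).and self_mem_nhdsWithin).exists (f := 𝓝[>] 0)
  obtain ⟨N, hN⟩ := hx η hη
  filter_upwards [eventually_ge_atTop N] with n hn t ht
  obtain ⟨l, hlmaps, hl⟩ := (hN n hn).exists_near_id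
  obtain ⟨hlt, hclose⟩ := hl t ht
  have hcont : dist (y (l t)) (y t) < ε / 2 :=
    hyδ _ (hlmaps ht) _ ht (by rw [Real.dist_eq]; linarith)
  rw [Real.dist_eq] at hcont ⊢
  calc |y t - x n t| ≤ |y t - y (l t)| + |y (l t) - x n t| := abs_sub_le _ _ _
    _ = |y (l t) - y t| + |x n t - y (l t)| := by
        rw [abs_sub_comm (y t) (y (l t)), abs_sub_comm (y (l t)) (x n t)]
    _ < ε := by linarith

lemma SkorokhodTendsto.eventually_lt {x : ℕ → ℝ → ℝ} {y : ℝ → ℝ} (hx : SkorokhodTendsto x y)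
    {a c : ℝ} (hac : a < c) (hy : ∀ t ∈ Icc (0:ℝ) 1, c < y t) :
    ∀ᶠ n in atTop, ∀ t ∈ Icc (0:ℝ) 1, a < x n t := by
  obtain ⟨N, hN⟩ := hx (c - a) (sub_pos.mpr hac)
  filter_upwards [eventually_ge_atTop N] with n hn t ht
  obtain ⟨l, hlmaps, hl⟩ := (hN n hn).exists_near_id
  have hclose := (abs_le.mp (hl t ht).2).1
  linarith [hy _ (hlmaps ht)]

lemma eventually_forall_le_of_lt_div {ι α : Type*} {p : Filter ι} {f : ι → ℝ}
    (hf : Tendsto f p atTop) {g : ι → α → ℝ} {s : Set α} {a : ℝ} (ha : 0 < a)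
    (hg : ∀ᶠ n in p, ∀ t ∈ s, a < g n t / f n) (M : ℝ) :
    ∀ᶠ n in p, ∀ t ∈ s, M ≤ g n t := by
  filter_upwards [hg, hf.eventually_ge_atTop (M / a), hf.eventually_gt_atTop 0]
    with n hn hfM hf0 t ht
  have hlt := (lt_div_iff₀ hf0).mp (hn t ht)
  calc M = a * (M / a) := (mul_div_cancel₀ M ha.ne').symm
    _ ≤ a * f n := mul_le_mul_of_nonneg_left hfM ha.le
    _ ≤ g n t := hlt.le

lemma TendstoUniformlyOn.comp_index {ι α β : Type*} [UniformSpace β] {F : ℕ → α → β}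
    {g : α → β} {s : Set α} (hF : TendstoUniformlyOn F g atTop s) {p : Filter ι}
    {k : ι → α → ℕ} (hk : ∀ M, ∀ᶠ n in p, ∀ t ∈ s, M ≤ k n t) :
    TendstoUniformlyOn (fun n t => F (k n t) t) g p s := by
  intro u hu
  obtain ⟨M, hM⟩ := eventually_atTop.mp (hF u hu)
  filter_upwards [hk M] with n hn t ht using hM _ (hn t ht) t ht

theorem randomly_indexed_composition_uniform_convergence_general
    (x : ℕ → ℝ → ℝ) (xlim : ℝ → ℝ) (μ : ℕ → ℝ → ℕ) (f : ℕ → ℝ) (μlim : ℝ → ℝ) (c : ℝ)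
    (hx : SkorokhodTendsto x xlim)
    (hxlim_cont : ContinuousOn xlim (Icc 0 1))
    (hf : Tendsto f atTop atTop)
    (hμ : SkorokhodTendsto (fun n t => (μ n t : ℝ) / f n) μlim)
    (hc : 0 < c) (hμlim : ∀ t ∈ Icc (0:ℝ) 1, c < μlim t) :
    TendstoUniformlyOn (fun n t => x (μ n t) t) xlim atTop (Icc 0 1) := by
  have hμ_large := eventually_forall_le_of_lt_div hf (half_pos hc)
    (hμ.eventually_lt (half_lt_self hc) hμlim)
  refine (hx.tendstoUniformlyOn hxlim_cont).comp_index fun M => ?_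
  filter_upwards [hμ_large M] with n hn t ht
  exact_mod_cast hn t ht

theorem randomly_indexed_composition_uniform_convergence
    (x : ℕ → ℝ → ℝ) (xlim : ℝ → ℝ) (μ : ℕ → ℝ → ℕ) (f : ℕ → ℝ) (μlim : ℝ → ℝ) (c : ℝ)
    (hx_cadlag : ∀ n, Cadlag (x n))
    (hx : SkorokhodTendsto x xlim)
    (hxlim_cont : ContinuousOn xlim (Icc 0 1))
    (hμ_cadlag : ∀ n, Cadlag (fun t => (μ n t : ℝ)))
    (hμ_mono : ∀ n, MonotoneOn (fun t => (μ n t : ℝ)) (Icc 0 1))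
    (hf : Tendsto f atTop atTop)
    (hμ : SkorokhodTendsto (fun n t => (μ n t : ℝ) / f n) μlim)
    (hc : 0 < c) (hμlim : ∀ t ∈ Icc (0:ℝ) 1, c < μlim t) :
    TendstoUniformlyOn (fun n t => x (μ n t) t) xlim atTop (Icc 0 1) :=
  randomly_indexed_composition_uniform_convergence_general x xlim μ f μlim c hx hxlim_cont hf hμ hc
    hμlim
end

section
/- Let $Y_n$ be a sequence of real-valued random variables converging in distribution to a random variable $Y$, and let $\nu_n$ be a sequence of $\mathbb{N}$-valued random variables independent of the sequence $(Y_n)$ such that $\nu_n / f(n) \to \nu$ in distribution, where $f(n) \to \infty$ and $\nu > c$ almost surely for some constant $c > 0$. Then $Y_{\nu_n}$ converges in distribution to $Y$. -/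
/-!
By independence of the index from the sequence, `E g(Y_{ν_n}) = E A(ν_n)` where
`A k = E g(Y_k) → E g(Y)`. Since `ν_n / f n` converges in distribution to a limit that exceeds
`c > 0` almost surely while `f n → ∞`, the indices `ν_n` escape to infinity in probability, and
averaging a convergent (hence bounded) sequence along such indices preserves its limit.
-/

open Filter MeasureTheory ProbabilityTheory

/-- Convergence in distribution of real random variables, tested against
bounded continuous functions. -/
def TendstoInDistribution {Ω : Type*} [MeasurableSpace Ω] (P : Measure Ω)
    (Z : ℕ → Ω → ℝ) (Zlim : Ω → ℝ) : Prop :=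
  ∀ g : BoundedContinuousFunction ℝ ℝ,
    Tendsto (fun n => ∫ ω, g (Z n ω) ∂P) atTop (nhds (∫ ω, g (Zlim ω) ∂P))

open Topology BoundedContinuousFunction

section

variable {Ω : Type*} [MeasurableSpace Ω] {P : Measure Ω}

theorem ProbabilityTheory.IndepFun.integral_eval_eq_integral_integral [IsFiniteMeasure P]
    {ι E : Type*} [Countable ι] [MeasurableSpace ι] [MeasurableSingletonClass ι]
    [TopologicalSpace E] [MeasurableSpace E] [OpensMeasurableSpace E]
    {X : ι → Ω → E} {N : Ω → ι} (hindep : IndepFun (fun ω i => X i ω) N P)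
    (hX : ∀ i, Measurable (X i)) (hN : Measurable N) (g : E →ᵇ ℝ) :
    ∫ ω, g (X (N ω) ω) ∂P = ∫ ω, ∫ ω', g (X (N ω) ω') ∂P ∂P := by
  set Xs : Ω → ι → E := fun ω i => X i ω
  have hXs : Measurable Xs := measurable_pi_lambda _ hX
  set F : (ι → E) × ι → ℝ := fun p => g (p.1 p.2)
  have hF : Measurable F := measurable_from_prod_countable_left fun i =>
    g.continuous.measurable.comp (measurable_pi_apply i)
  have hF_int : Integrable F ((P.map Xs).prod (P.map N)) :=
    .of_bound hF.aestronglyMeasurable ‖g‖ (.of_forall fun p => g.norm_coe_le_norm _)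
  calc ∫ ω, g (X (N ω) ω) ∂P = ∫ p, F p ∂(P.map fun ω => (Xs ω, N ω)) :=
        (integral_map (hXs.prodMk hN).aemeasurable hF.aestronglyMeasurable).symm
    _ = ∫ i, ∫ x, F (x, i) ∂(P.map Xs) ∂(P.map N) := by
        rw [(indepFun_iff_map_prod_eq_prod_map_map hXs.aemeasurable hN.aemeasurable).1 hindep,
          integral_prod_symm F hF_int]
    _ = ∫ i, ∫ ω', g (X i ω') ∂P ∂(P.map N) := by
        congr 1 with i
        exact integral_map hXs.aemeasurable
          (g.continuous.measurable.comp (measurable_pi_apply i)).aestronglyMeasurable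
    _ = _ := integral_map hN.aemeasurable (measurable_of_countable _).aestronglyMeasurable

theorem TendstoInDistribution.tendsto_measureReal_le_of_ae_lt [IsFiniteMeasure P]
    {Z : ℕ → Ω → ℝ} {Zlim : Ω → ℝ} {a b : ℝ}
    (hZ : TendstoInDistribution P Z Zlim) (hZmeas : ∀ n, Measurable (Z n))
    (hab : a < b) (hlim : ∀ᵐ ω ∂P, b < Zlim ω) :
    Tendsto (fun n => P.real {ω | Z n ω ≤ a}) atTop (𝓝 0) := by
  obtain ⟨φ, hφb, hφa, hφ01⟩ := exists_bounded_zero_one_of_closed isClosed_Ici isClosed_Iic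
    (Set.Ici_disjoint_Iic.2 hab.not_ge)
  have hlim0 : ∫ ω, φ (Zlim ω) ∂P = 0 :=
    integral_eq_zero_of_ae (hlim.mono fun ω hω => hφb (Set.mem_Ici.2 hω.le))
  have hmarkov : ∀ n, P.real {ω | Z n ω ≤ a} ≤ ∫ ω, φ (Z n ω) ∂P := fun n =>
    calc P.real {ω | Z n ω ≤ a} ≤ P.real {ω | 1 ≤ φ (Z n ω)} :=
          measureReal_mono fun ω hω => (hφa (Set.mem_Iic.2 hω)).ge
      _ ≤ ∫ ω, φ (Z n ω) ∂P := by
          simpa using mul_meas_ge_le_integral_of_nonneg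
            (.of_forall fun ω => (hφ01 (Z n ω)).1)
            (.of_bound (φ.continuous.measurable.comp (hZmeas n)).aestronglyMeasurable 1
              (.of_forall fun ω => by
                simpa [abs_of_nonneg (hφ01 (Z n ω)).1] using (hφ01 (Z n ω)).2))
            1
  exact squeeze_zero (fun n => measureReal_nonneg) hmarkov (hlim0 ▸ hZ φ)

theorem tendsto_measureReal_lt_of_tendstoInDistribution_div [IsFiniteMeasure P]
    {ν : ℕ → Ω → ℕ} {νlim : Ω → ℝ} {f : ℕ → ℝ} {c : ℝ}
    (hνmeas : ∀ n, Measurable (ν n)) (hf : Tendsto f atTop atTop)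
    (hν : TendstoInDistribution P (fun n ω => (ν n ω : ℝ) / f n) νlim) (hc : 0 < c)
    (hνlim : ∀ᵐ ω ∂P, c < νlim ω) (N : ℕ) :
    Tendsto (fun n => P.real {ω | ν n ω < N}) atTop (𝓝 0) := by
  have hsmall := hν.tendsto_measureReal_le_of_ae_lt
    (fun n => (measurable_from_top.comp (hνmeas n)).div_const (f n)) (half_lt_self hc) hνlim
  refine squeeze_zero' (.of_forall fun n => measureReal_nonneg) ?_ hsmall
  filter_upwards [hf.eventually_gt_atTop 0, hf.eventually_ge_atTop (2 * N / c)]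
    with n hpos hlarge
  refine measureReal_mono fun ω (hω : ν n ω < N) => ?_
  show (ν n ω : ℝ) / f n ≤ c / 2
  rw [div_le_iff₀ hpos]
  rw [div_le_iff₀ hc] at hlarge
  have : (ν n ω : ℝ) ≤ N := by exact_mod_cast hω.le
  nlinarith

theorem abs_integral_comp_sub_le [IsProbabilityMeasure P] {X : Ω → ℕ} (hX : Measurable X)
    {A : ℕ → ℝ} {a δ D : ℝ} {N : ℕ}
    (hD : ∀ k, |A k - a| ≤ D) (hδ : ∀ k, N ≤ k → |A k - a| ≤ δ) :
    |∫ ω, A (X ω) ∂P - a| ≤ δ + D * P.real {ω | X ω < N} := by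
  have hXN : MeasurableSet {ω | X ω < N} := hX measurableSet_Iio
  have hAX_int : Integrable (fun ω => A (X ω)) P :=
    .of_bound ((measurable_of_countable A).comp hX).aestronglyMeasurable (|a| + D)
      (.of_forall fun ω => by
        have := hD (X ω); rw [Real.norm_eq_abs]; linarith [abs_sub_abs_le_abs_sub (A (X ω)) a])
  have hind : Integrable ({ω | X ω < N}.indicator (1 : Ω → ℝ)) P :=
    (integrable_const 1).indicator hXN
  have hpoint : ∀ ω, |A (X ω) - a| ≤ δ + D * {ω | X ω < N}.indicator 1 ω := by
    intro ω
    have hδ0 : 0 ≤ δ := (abs_nonneg _).trans (hδ N le_rfl)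
    by_cases hω : X ω < N
    · simpa [Set.indicator_of_mem (show ω ∈ {ω | X ω < N} from hω)] using
        (hD (X ω)).trans (le_add_of_nonneg_left hδ0)
    · simpa [Set.indicator_of_notMem (show ω ∉ {ω | X ω < N} from hω)] using
        hδ (X ω) (not_lt.1 hω)
  calc |∫ ω, A (X ω) ∂P - a| = |∫ ω, (A (X ω) - a) ∂P| := by
        rw [integral_sub hAX_int (integrable_const a), integral_const, probReal_univ, one_smul]
    _ ≤ ∫ ω, |A (X ω) - a| ∂P := abs_integral_le_integral_abs
    _ ≤ ∫ ω, (δ + D * {ω | X ω < N}.indicator 1 ω) ∂P :=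
        integral_mono_of_nonneg (.of_forall fun _ => abs_nonneg _)
          ((integrable_const δ).add (hind.const_mul D))
          (.of_forall hpoint)
    _ = δ + D * P.real {ω | X ω < N} := by
        rw [integral_add (integrable_const δ) (hind.const_mul D),
          integral_const, probReal_univ, one_smul, integral_const_mul,
          integral_indicator_one hXN]

theorem tendsto_integral_comp_of_tendsto_measureReal_lt [IsProbabilityMeasure P]
    {X : ℕ → Ω → ℕ} (hX : ∀ n, Measurable (X n))
    (hX_top : ∀ N : ℕ, Tendsto (fun n => P.real {ω | X n ω < N}) atTop (𝓝 0))
    {A : ℕ → ℝ} {a : ℝ} (hA : Tendsto A atTop (𝓝 a)) :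
    Tendsto (fun n => ∫ ω, A (X n ω) ∂P) atTop (𝓝 a) := by
  obtain ⟨D, hD⟩ :=
    (Metric.isBounded_iff_subset_closedBall a).1 (Metric.isBounded_range_of_tendsto A hA)
  have hD' : ∀ k, |A k - a| ≤ D := fun k => hD ⟨k, rfl⟩
  rw [Metric.tendsto_nhds]
  intro ε hε
  obtain ⟨N, hN⟩ := Metric.tendsto_atTop.1 hA (ε / 2) (half_pos hε)
  have hsmall : ∀ᶠ n in atTop, D * P.real {ω | X n ω < N} < ε / 2 := by
    simpa using
      ((hX_top N).const_mul D).eventually (gt_mem_nhds (by simpa using half_pos hε))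
  filter_upwards [hsmall] with n hn
  have := abs_integral_comp_sub_le (P := P) (hX n) hD' fun k hk => (hN k hk).le
  rw [Real.dist_eq]
  linarith

end

theorem randomly_indexed_convergence_in_distribution_general
    {Ω : Type*} [MeasurableSpace Ω] (P : Measure Ω) [IsProbabilityMeasure P]
    (Y : ℕ → Ω → ℝ) (Ylim : Ω → ℝ) (ν : ℕ → Ω → ℕ) (νlim : Ω → ℝ) (f : ℕ → ℝ) (c : ℝ)
    (hYmeas : ∀ n, Measurable (Y n))
    (hνmeas : ∀ n, Measurable (ν n))
    (hY : TendstoInDistribution P Y Ylim)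
    (hindep : IndepFun (fun ω (i : ℕ) => Y i ω) (fun ω (n : ℕ) => ν n ω) P)
    (hf : Tendsto f atTop atTop)
    (hν : TendstoInDistribution P (fun n ω => (ν n ω : ℝ) / f n) νlim)
    (hc : 0 < c) (hνlim : ∀ᵐ ω ∂P, c < νlim ω) :
    TendstoInDistribution P (fun n ω => Y (ν n ω) ω) Ylim := by
  intro g
  have hmix : ∀ n,
      ∫ ω, g (Y (ν n ω) ω) ∂P = ∫ ω, ∫ ω', g (Y (ν n ω) ω') ∂P ∂P :=
    fun n => (hindep.comp measurable_id (measurable_pi_apply n)).integral_eval_eq_integral_integral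
      hYmeas (hνmeas n) g
  simp_rw [hmix]
  exact tendsto_integral_comp_of_tendsto_measureReal_lt (A := fun k => ∫ ω, g (Y k ω) ∂P)
    hνmeas (tendsto_measureReal_lt_of_tendstoInDistribution_div hνmeas hf hν hc hνlim) (hY g)

theorem randomly_indexed_convergence_in_distribution
    {Ω : Type*} [MeasurableSpace Ω] (P : Measure Ω) [IsProbabilityMeasure P]
    (Y : ℕ → Ω → ℝ) (Ylim : Ω → ℝ) (ν : ℕ → Ω → ℕ) (νlim : Ω → ℝ) (f : ℕ → ℝ) (c : ℝ)
    (hYmeas : ∀ n, Measurable (Y n)) (hYlim_meas : Measurable Ylim)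
    (hνmeas : ∀ n, Measurable (ν n)) (hνlim_meas : Measurable νlim)
    (hY : TendstoInDistribution P Y Ylim)
    (hindep : IndepFun (fun ω (i : ℕ) => Y i ω) (fun ω (n : ℕ) => ν n ω) P)
    (hf : Tendsto f atTop atTop)
    (hν : TendstoInDistribution P (fun n ω => (ν n ω : ℝ) / f n) νlim)
    (hc : 0 < c) (hνlim : ∀ᵐ ω ∂P, c < νlim ω) :
    TendstoInDistribution P (fun n ω => Y (ν n ω) ω) Ylim :=
  randomly_indexed_convergence_in_distribution_general P Y Ylim ν νlim f c hYmeas hνmeas hY hindep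
    hf hν hc hνlim
end

section
/- With the functions $x_n$ and $x$ of the preceding construction, for any strictly increasing continuous bijection $\mu : [0,1] \to [0,1]$ fixing endpoints and any $n$, one has $\max\big(\sup_{0 \le t \le 1}|x_{2n}(\mu(t)) - x(t)|,\ \sup_{0 \le t \le 1}|x_{2n+1}(\mu(t)) - x(t)|\big) \ge 1/2$. In particular, if $\nu_n$ equals $2n$ or $2n+1$ each with probability $1/2$, then $\frac{1}{2}\sup_t|x_{2n}(\mu(t))-x(t)| + \frac{1}{2}\sup_t|x_{2n+1}(\mu(t))-x(t)|$ does not tend to $0$ as $n \to \infty$ for any choice of $\mu = \mu_n$. -/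
/-!
If `μ(1/2) ≤ 1/2`, then at `t = 1/2` the time-changed `x_{2n+1}` is still `0` while `x` has
already jumped to `1`. If `μ(1/2) > 1/2`, then some `t < 1/2` is mapped into `(1/2, μ(1/2))`,
where `x_{2n}` is already `1` while `x` is still `0`. Either way one of the two uniform
distances is `1`.
-/

open Filter Set

/-- The even-indexed functions `x_{2n}`, ramping from `0` to `1` on `[1/2 - 2^{-2n}, 1/2]`. -/
noncomputable def xEven (n : ℕ) : ℝ → ℝ := fun t =>
  if t ≤ 1 / 2 - 1 / 2 ^ (2 * n) then 0
  else if t ≤ 1 / 2 then 2 ^ (2 * n) * t + 1 - 2 ^ (2 * n) / 2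
  else 1

/-- The odd-indexed functions `x_{2n+1}`, ramping from `0` to `1` on `[1/2, 1/2 + 2^{-(2n+1)}]`. -/
noncomputable def xOdd (n : ℕ) : ℝ → ℝ := fun t =>
  if t ≤ 1 / 2 then 0
  else if t ≤ 1 / 2 + 1 / 2 ^ (2 * n + 1) then 2 ^ (2 * n + 1) * t - 2 ^ (2 * n)
  else 1

/-- The sequence `x_m`: `xEven n` for `m = 2n` and `xOdd n` for `m = 2n + 1`. -/
noncomputable def xSeq (m : ℕ) : ℝ → ℝ :=
  if m % 2 = 0 then xEven (m / 2) else xOdd (m / 2)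

/-- The limit function `x = 1_{[1/2, 1]}`. -/
noncomputable def xLim : ℝ → ℝ := fun t => if t < 1 / 2 then 0 else 1

lemma xEven_mem_Icc (n : ℕ) (s : ℝ) : xEven n s ∈ Icc (0:ℝ) 1 := by
  have hpow : (2:ℝ) ^ (2 * n) * (1 / 2 ^ (2 * n)) = 1 := by field_simp
  unfold xEven
  split_ifs with h₁
  · simp
  · rw [not_le] at h₁
    constructor <;> nlinarith [mul_lt_mul_of_pos_left h₁ (by positivity : (0:ℝ) < 2 ^ (2 * n))]
  · simp

lemma xOdd_mem_Icc (n : ℕ) (s : ℝ) : xOdd n s ∈ Icc (0:ℝ) 1 := by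
  have hpow : (2:ℝ) ^ (2 * n + 1) * (1 / 2 ^ (2 * n + 1)) = 1 := by field_simp
  have hsucc : (2:ℝ) ^ (2 * n + 1) = 2 * 2 ^ (2 * n) := by ring
  unfold xOdd
  split_ifs with h₁ h₂
  · simp
  · rw [not_le] at h₁
    constructor <;>
      nlinarith [mul_le_mul_of_nonneg_left h₂ (by positivity : (0:ℝ) ≤ 2 ^ (2 * n + 1))]
  · simp

lemma xLim_mem_Icc (t : ℝ) : xLim t ∈ Icc (0:ℝ) 1 := by
  unfold xLim
  split_ifs <;> simp

lemma xEven_of_half_lt (n : ℕ) {s : ℝ} (hs : 1 / 2 < s) : xEven n s = 1 := by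
  have : (0:ℝ) < 1 / 2 ^ (2 * n) := by positivity
  simp only [xEven, if_neg (show ¬s ≤ 1 / 2 - 1 / 2 ^ (2 * n) by linarith), if_neg hs.not_ge]

lemma xOdd_of_le_half (n : ℕ) {s : ℝ} (hs : s ≤ 1 / 2) : xOdd n s = 0 :=
  if_pos hs

lemma bddAbove_range_abs_sub_of_mem_Icc {ι : Type*} {F G : ι → ℝ}
    (hF : ∀ i, F i ∈ Icc (0:ℝ) 1) (hG : ∀ i, G i ∈ Icc (0:ℝ) 1) :
    BddAbove (range fun i => |F i - G i|) := by
  refine ⟨1, forall_mem_range.2 fun i => abs_sub_le_iff.2 ⟨?_, ?_⟩⟩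
  · linarith [(hF i).2, (hG i).1]
  · linarith [(hF i).1, (hG i).2]

lemma StrictMonoOn.exists_lt_of_lt_apply {α : Type*} [LinearOrder α] [DenselyOrdered α]
    {μ : α → α} {s : Set α} [s.OrdConnected] (hmono : StrictMonoOn μ s) (hsurj : SurjOn μ s s)
    {b : α} (hb : b ∈ s) (hμb : μ b ∈ s) (h : b < μ b) : ∃ t ∈ s, t < b ∧ b < μ t := by
  obtain ⟨u, hbu, huμ⟩ := exists_between h
  obtain ⟨t, ht, rfl⟩ := hsurj (Set.OrdConnected.out ‹_› hb hμb ⟨hbu.le, huμ.le⟩)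
  exact ⟨t, ht, (hmono.lt_iff_lt ht hb).1 huμ, hbu⟩

lemma one_le_max_iSup (μ : ℝ → ℝ) (hμ : TimeChange μ) (n : ℕ) :
    1 ≤ max (⨆ t : Icc (0:ℝ) 1, |xEven n (μ t) - xLim t|)
      (⨆ t : Icc (0:ℝ) 1, |xOdd n (μ t) - xLim t|) := by
  obtain ⟨hmono, -, -, -, hmaps, hsurj⟩ := hμ
  have hhalf : (1:ℝ) / 2 ∈ Icc (0:ℝ) 1 := by norm_num
  by_cases hs : μ (1 / 2) ≤ 1 / 2
  · refine le_max_of_le_right (le_ciSup_of_le ?_ ⟨1 / 2, hhalf⟩ ?_)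
    · exact bddAbove_range_abs_sub_of_mem_Icc (fun _ => xOdd_mem_Icc _ _) (fun _ => xLim_mem_Icc _)
    · simp only [xOdd_of_le_half n hs, xLim, lt_irrefl, if_false]
      norm_num
  · obtain ⟨t, ht, ht_lt, hμt⟩ :=
      hmono.exists_lt_of_lt_apply hsurj hhalf (hmaps hhalf) (not_le.1 hs)
    refine le_max_of_le_left (le_ciSup_of_le ?_ ⟨t, ht⟩ ?_)
    · exact bddAbove_range_abs_sub_of_mem_Icc (fun _ => xEven_mem_Icc _ _) (fun _ => xLim_mem_Icc _)
    · simp only [xEven_of_half_lt n hμt, xLim, if_pos ht_lt]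
      norm_num

theorem no_common_time_change_for_discontinuous_limit :
    (∀ μ : ℝ → ℝ, TimeChange μ → ∀ n : ℕ,
      (1:ℝ) / 2 ≤ max (⨆ t : Icc (0:ℝ) 1, |xEven n (μ t) - xLim t|)
        (⨆ t : Icc (0:ℝ) 1, |xOdd n (μ t) - xLim t|)) ∧
      ∀ μ : ℕ → ℝ → ℝ, (∀ n, TimeChange (μ n)) →
        ¬ Tendsto (fun n =>
            (1:ℝ) / 2 * (⨆ t : Icc (0:ℝ) 1, |xEven n (μ n t) - xLim t|) +
            (1:ℝ) / 2 * (⨆ t : Icc (0:ℝ) 1, |xOdd n (μ n t) - xLim t|))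
          atTop (nhds 0) := by
  refine ⟨fun μ hμ n => le_trans (by norm_num) (one_le_max_iSup μ hμ n), fun μ hμ hlim => ?_⟩
  have hbound : ∀ n, (1:ℝ) / 2 ≤
      (1:ℝ) / 2 * (⨆ t : Icc (0:ℝ) 1, |xEven n (μ n t) - xLim t|) +
      (1:ℝ) / 2 * (⨆ t : Icc (0:ℝ) 1, |xOdd n (μ n t) - xLim t|) := fun n => by
    have hmax := one_le_max_iSup (μ n) (hμ n) n
    have hsum := max_le_add_of_nonneg (Real.iSup_nonneg fun t : Icc (0:ℝ) 1 => abs_nonneg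
      (xEven n (μ n t) - xLim t)) (Real.iSup_nonneg fun t : Icc (0:ℝ) 1 => abs_nonneg
      (xOdd n (μ n t) - xLim t))
    linarith
  linarith [ge_of_tendsto' hlim hbound]
end
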